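/- There exists a constant c > 0 such that for every finite set S of axis-aligned squares whose side lengths all lie in [d, ψ·d] for some d > 0 and ψ ≥ 1, and every storing cell C of S, the set 𝒫(π(C)) = ⋃_{γ∈π(C)} 𝒫(γ) has at most c·ψ² elements. -/

import Mathlib

open Set

/-- A dyadic cell at level `level` (side length `2^level`) with lower-left corner
`(a·2^level, b·2^level)`. -/
structure DyadicCell where
  level : ℤ
  a : ℤ
  b : ℤ
deriving DecidableEq

/-- The side length of a dyadic cell. -/
noncomputable def DyadicCell.side (C : DyadicCell) : ℝ := 2 ^ C.level

/-- The dyadic cell as a subset of the plane. -/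
noncomputable def DyadicCell.toSet (C : DyadicCell) : Set (ℝ × ℝ) :=
  Set.Icc ((C.a : ℝ) * 2 ^ C.level) ((C.a + 1 : ℝ) * 2 ^ C.level) ×ˢ
    Set.Icc ((C.b : ℝ) * 2 ^ C.level) ((C.b + 1 : ℝ) * 2 ^ C.level)

/-- `5C`: the square obtained by scaling the cell `C` by a factor `5` about its center. -/
noncomputable def DyadicCell.scale5 (C : DyadicCell) : Set (ℝ × ℝ) :=
  Set.Icc ((C.a - 2 : ℝ) * 2 ^ C.level) ((C.a + 3 : ℝ) * 2 ^ C.level) ×ˢ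
    Set.Icc ((C.b - 2 : ℝ) * 2 ^ C.level) ((C.b + 3 : ℝ) * 2 ^ C.level)

/-- An axis-aligned square `[x, x+s] × [y, y+s]` of side length `s > 0`. -/
structure Square where
  x : ℝ
  y : ℝ
  s : ℝ
  s_pos : 0 < s

/-- The square as a subset of the plane. -/
noncomputable def Square.toSet (σ : Square) : Set (ℝ × ℝ) :=
  Set.Icc σ.x (σ.x + σ.s) ×ˢ Set.Icc σ.y (σ.y + σ.s)

/-- The center of a square. -/
noncomputable def Square.center (σ : Square) : ℝ × ℝ := (σ.x + σ.s / 2, σ.y + σ.s / 2)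

/-- `C` is a storing cell of `σ`: a dyadic cell of maximal side length among those that
contain the center of `σ` and are contained in `σ`. -/
def IsStoringCell (σ : Square) (C : DyadicCell) : Prop :=
  σ.center ∈ C.toSet ∧ C.toSet ⊆ σ.toSet ∧
    ∀ D : DyadicCell, σ.center ∈ D.toSet → D.toSet ⊆ σ.toSet → D.side ≤ C.side

/-- `C` is a storing cell of the set `S` (with fixed storing-cell choice `c`):
some square of `S` is stored in `C`. -/
def IsStoringCellOf (S : Finset Square) (c : Square → DyadicCell) (C : DyadicCell) : Prop :=
  ∃ σ ∈ S, c σ = C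

/-- `π(C)`: the squares of `S` stored in `C`. -/
def piCell (S : Finset Square) (c : Square → DyadicCell) (C : DyadicCell) : Set Square :=
  {σ | σ ∈ S ∧ c σ = C}

/-- `𝒞(σ)`: the dyadic cells `D ⊆ σ` containing at least one storing cell of `S`,
maximal with both properties. -/
def calC (S : Finset Square) (c : Square → DyadicCell) (σ : Square) : Set DyadicCell :=
  {D | D.toSet ⊆ σ.toSet ∧ (∃ E, IsStoringCellOf S c E ∧ E.toSet ⊆ D.toSet) ∧
    ¬ ∃ D' : DyadicCell, D.toSet ⊂ D'.toSet ∧ D'.toSet ⊆ σ.toSet ∧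
      ∃ E, IsStoringCellOf S c E ∧ E.toSet ⊆ D'.toSet}

/-- `𝒫(γ)`: the storing cells `D` of `S` with `side(D) ≤ side(γ)` such that `5D`
intersects the boundary of `γ`. -/
def calP (S : Finset Square) (c : Square → DyadicCell) (γ : Square) : Set DyadicCell :=
  {D | IsStoringCellOf S c D ∧ D.side ≤ γ.s ∧ (D.scale5 ∩ frontier γ.toSet).Nonempty}

lemma DyadicCell.side_pos' (C : DyadicCell) : 0 < C.side := by
  unfold DyadicCell.side; positivity

lemma subset_coords' {C : DyadicCell} {σ : Square} (h : C.toSet ⊆ σ.toSet) :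
    σ.x ≤ C.a * 2^C.level ∧ ((C.a:ℝ)+1)*2^C.level ≤ σ.x + σ.s ∧
    σ.y ≤ C.b * 2^C.level ∧ ((C.b:ℝ)+1)*2^C.level ≤ σ.y + σ.s := by
  have hm : (0:ℝ) < 2 ^ C.level := by positivity
  have h1 : ((C.a : ℝ) * 2 ^ C.level, (C.b:ℝ) * 2 ^ C.level) ∈ σ.toSet := by
    apply h
    constructor <;> constructor <;> dsimp only <;> nlinarith
  have h2 : (((C.a : ℝ)+1) * 2 ^ C.level, ((C.b:ℝ)+1) * 2 ^ C.level) ∈ σ.toSet := by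
    apply h
    constructor <;> constructor <;> dsimp only <;> nlinarith
  obtain ⟨⟨a1,a2⟩,⟨a3,a4⟩⟩ := h1
  obtain ⟨⟨b1,b2⟩,⟨b3,b4⟩⟩ := h2
  exact ⟨a1, b2, a3, b4⟩

lemma storing_side_le' {σ : Square} {C : DyadicCell} (h : IsStoringCell σ C) :
    C.side ≤ σ.s := by
  obtain ⟨a1, a2, _, _⟩ := subset_coords' h.2.1
  unfold DyadicCell.side
  nlinarith

lemma floor_cell_1d' {m s x : ℝ} (hm : 0 < m) (hms : m ≤ s/2) :
    ((⌊(x + s/2)/m⌋ : ℝ))*m ≤ x + s/2 ∧ x + s/2 ≤ ((⌊(x + s/2)/m⌋ : ℝ)+1)*m ∧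
    x ≤ (⌊(x + s/2)/m⌋ : ℝ)*m ∧ ((⌊(x + s/2)/m⌋ : ℝ)+1)*m ≤ x + s := by
  set u := x + s/2 with hu
  have h1 : (⌊u/m⌋ : ℝ) ≤ u/m := Int.floor_le _
  have h2 : u/m < (⌊u/m⌋ : ℝ) + 1 := Int.lt_floor_add_one _
  have e : (u/m)*m = u := div_mul_cancel₀ _ hm.ne'
  constructor
  · nlinarith
  refine ⟨by nlinarith, by nlinarith, by nlinarith⟩

lemma storing_side_lb' {σ : Square} {C : DyadicCell} (h : IsStoringCell σ C) :
    σ.s < 4 * C.side := by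
  have hs := σ.s_pos
  set ℓ := Int.log 2 (σ.s/2) with hℓ
  have hm1 : (2:ℝ)^ℓ ≤ σ.s/2 := by
    have := Int.zpow_log_le_self (b := 2) (r := σ.s/2) (by norm_num) (by linarith)
    simpa using this
  have hm2 : σ.s/2 < (2:ℝ)^(ℓ+1) := by
    have := Int.lt_zpow_succ_log_self (b := 2) (by norm_num) (σ.s/2)
    simpa using this
  have hm : (0:ℝ) < 2^ℓ := by positivity
  set D : DyadicCell := ⟨ℓ, ⌊(σ.x + σ.s/2)/2^ℓ⌋, ⌊(σ.y + σ.s/2)/2^ℓ⌋⟩ with hD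
  obtain ⟨hx1, hx2, hx3, hx4⟩ := floor_cell_1d' (x := σ.x) (s := σ.s) hm hm1
  obtain ⟨hy1, hy2, hy3, hy4⟩ := floor_cell_1d' (x := σ.y) (s := σ.s) hm hm1
  have hcen : σ.center ∈ D.toSet := ⟨⟨hx1, hx2⟩, ⟨hy1, hy2⟩⟩
  have hsub : D.toSet ⊆ σ.toSet := by
    rintro ⟨p, q⟩ ⟨⟨hp1, hp2⟩, ⟨hq1, hq2⟩⟩
    exact ⟨⟨le_trans hx3 hp1, le_trans hp2 hx4⟩, ⟨le_trans hy3 hq1, le_trans hq2 hy4⟩⟩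
  have := h.2.2 D hcen hsub
  have hDs : D.side = 2^ℓ := rfl
  have h2 : (2:ℝ)^(ℓ+1) = 2 * 2^ℓ := by rw [zpow_add_one₀]; ring; norm_num
  rw [hDs] at this
  nlinarith

/-- Key box lemma: geometric constraints on a cell `D ∈ calP S c γ` for `γ ∈ piCell S c C`. -/
lemma calP_bounds {S : Finset Square} {c : Square → DyadicCell}
    (hst : ∀ σ ∈ S, IsStoringCell σ (c σ)) {d ψ : ℝ} (hd : 0 < d)
    (hS : ∀ σ ∈ S, d ≤ σ.s ∧ σ.s ≤ ψ * d) {C : DyadicCell} {γ : Square}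
    (hγ : γ ∈ piCell S c C) {D : DyadicCell} (hD : D ∈ calP S c γ) :
    d < 4 * D.side ∧ D.side ≤ ψ * d ∧
    (C.a:ℝ)*C.side - ψ*d/2 - 3*D.side ≤ D.a*D.side ∧
    (D.a:ℝ)*D.side ≤ ((C.a:ℝ)+1)*C.side + ψ*d/2 + 2*D.side ∧
    (C.b:ℝ)*C.side - ψ*d/2 - 3*D.side ≤ D.b*D.side ∧
    (D.b:ℝ)*D.side ≤ ((C.b:ℝ)+1)*C.side + ψ*d/2 + 2*D.side := by
  obtain ⟨hγS, hγC⟩ := hγ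
  obtain ⟨⟨τ, hτS, hτD⟩, hside, p, hp5, hpf⟩ := hD
  have hγst : IsStoringCell γ C := hγC ▸ hst γ hγS
  have hτst : IsStoringCell τ D := hτD ▸ hst τ hτS
  have h1 : d < 4 * D.side := lt_of_le_of_lt (hS τ hτS).1 (storing_side_lb' hτst)
  have h2 : D.side ≤ ψ * d := hside.trans (hS γ hγS).2
  have hγs : γ.s ≤ ψ * d := (hS γ hγS).2
  -- the point p lies in γ.toSet
  have hpγ : p ∈ γ.toSet := by
    have hcl : IsClosed γ.toSet := isClosed_Icc.prod isClosed_Icc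
    exact hcl.frontier_subset hpf
  obtain ⟨⟨hp1, hp2⟩, ⟨hp3, hp4⟩⟩ := hpγ
  -- center of γ in C
  obtain ⟨⟨hc1, hc2⟩, ⟨hc3, hc4⟩⟩ := hγst.1
  obtain ⟨⟨h51, h52⟩, ⟨h53, h54⟩⟩ := hp5
  have hm : D.side = 2 ^ D.level := rfl
  have hh : C.side = 2 ^ C.level := rfl
  simp only [Square.center] at hc1 hc2 hc3 hc4
  refine ⟨h1, h2, ?_, ?_, ?_, ?_⟩ <;> rw [hm, hh] <;>
    [skip; skip; skip; skip] <;> push_cast at h51 h52 h53 h54 ⊢ <;> nlinarith [γ.s_pos]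

lemma card_Icc_le_real (a b : ℤ) (w : ℝ) (h : ((b:ℝ) + 1 - a) ≤ w) (hw : 0 ≤ w) :
    ((Finset.Icc a b).card : ℝ) ≤ w := by
  rw [Int.card_Icc]
  have h1 : (((b + 1 - a).toNat : ℤ) : ℝ) = max ((b:ℝ) + 1 - a) 0 := by
    rw [Int.toNat_eq_max]
    push_cast
    rfl
  have : (((b + 1 - a).toNat : ℤ) : ℝ) ≤ w := by
    rw [h1]; exact max_le h hw
  exact_mod_cast this

set_option maxHeartbeats 1000000 in
theorem statement13 : ∃ cst : ℝ, 0 < cst ∧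
    ∀ (S : Finset Square) (c : Square → DyadicCell),
      (∀ σ ∈ S, IsStoringCell σ (c σ)) →
    ∀ (d ψ : ℝ), 0 < d → 1 ≤ ψ → (∀ σ ∈ S, d ≤ σ.s ∧ σ.s ≤ ψ * d) →
    ∀ C : DyadicCell, IsStoringCellOf S c C →
      letI A : Set DyadicCell := ⋃ γ ∈ piCell S c C, calP S c γ
      A.Finite ∧ (A.ncard : ℝ) ≤ cst * ψ ^ 2 := by
  refine ⟨1000, by norm_num, ?_⟩
  intro S c hst d ψ hd hψ hS C hC
  obtain ⟨σ₀, hσ₀S, hσ₀C⟩ := hC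
  have hstC : IsStoringCell σ₀ C := hσ₀C ▸ hst σ₀ hσ₀S
  have hψ0 : (0:ℝ) < ψ := lt_of_lt_of_le one_pos hψ
  have hψd : 0 < ψ * d := by positivity
  have hh : C.side ≤ ψ * d := (storing_side_le' hstC).trans (hS σ₀ hσ₀S).2
  have hh0 : 0 < C.side := C.side_pos'
  set L : ℤ := Int.log 2 (d/4) + 1 with hLdef
  set U : ℤ := Int.log 2 (ψ*d) with hUdef
  have hL2 : d/4 < (2:ℝ)^L := by
    have := Int.lt_zpow_succ_log_self (b := 2) (by norm_num) (d/4)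
    simpa [hLdef] using this
  have hL1 : (2:ℝ)^(L-1) ≤ d/4 := by
    have := Int.zpow_log_le_self (b := 2) (r := d/4) (by norm_num) (by linarith)
    have e : L - 1 = Int.log 2 (d/4) := by omega
    rw [e]
    simpa using this
  have hU1 : (2:ℝ)^U ≤ ψ*d := by
    have := Int.zpow_log_le_self (b := 2) (r := ψ*d) (by norm_num) hψd
    simpa [hUdef] using this
  have hU2 : ψ*d < (2:ℝ)^(U+1) := by
    have := Int.lt_zpow_succ_log_self (b := 2) (by norm_num) (ψ*d)
    simpa [hUdef] using this
  set x₁ : ℝ := (C.a:ℝ)*C.side - ψ*d/2 with hx₁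
  set x₂ : ℝ := ((C.a:ℝ)+1)*C.side + ψ*d/2 with hx₂
  set y₁ : ℝ := (C.b:ℝ)*C.side - ψ*d/2 with hy₁
  set y₂ : ℝ := ((C.b:ℝ)+1)*C.side + ψ*d/2 with hy₂
  set F : ℤ → Finset DyadicCell := fun ℓ =>
    ((Finset.Icc (⌈x₁/2^ℓ⌉ - 3) (⌊x₂/2^ℓ⌋ + 2)) ×ˢ
     (Finset.Icc (⌈y₁/2^ℓ⌉ - 3) (⌊y₂/2^ℓ⌋ + 2))).image
      (fun p => ⟨ℓ, p.1, p.2⟩) with hF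
  set T : Finset DyadicCell := (Finset.Icc L U).biUnion F with hT
  have hAT : (⋃ γ ∈ piCell S c C, calP S c γ) ⊆ ↑T := by
    intro D hD
    simp only [Set.mem_iUnion, exists_prop] at hD
    obtain ⟨γ, hγ, hDγ⟩ := hD
    obtain ⟨h1, h2, h3, h4, h5, h6⟩ := calP_bounds hst hd hS hγ hDγ
    have hm0 : (0:ℝ) < 2 ^ D.level := by positivity
    have hmside : D.side = 2 ^ D.level := rfl
    rw [hmside] at h1 h2 h3 h4 h5 h6
    have hlev1 : L ≤ D.level := by
      by_contra hcon
      push_neg at hcon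
      have : (2:ℝ)^D.level ≤ 2^(L-1) :=
        zpow_le_zpow_right₀ (by norm_num) (by omega)
      linarith
    have hlev2 : D.level ≤ U := by
      by_contra hcon
      push_neg at hcon
      have : (2:ℝ)^(U+1) ≤ 2^D.level :=
        zpow_le_zpow_right₀ (by norm_num) (by omega)
      linarith
    refine Finset.mem_coe.mpr (Finset.mem_biUnion.mpr
      ⟨D.level, Finset.mem_Icc.mpr ⟨hlev1, hlev2⟩, ?_⟩)
    refine Finset.mem_image.mpr ⟨(D.a, D.b), ?_, rfl⟩
    refine Finset.mem_product.mpr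
      ⟨Finset.mem_Icc.mpr ⟨?_, ?_⟩, Finset.mem_Icc.mpr ⟨?_, ?_⟩⟩
    · have hx : x₁/2^D.level ≤ ((D.a + 3 : ℤ) : ℝ) := by
        rw [div_le_iff₀ hm0]; push_cast; simp only [hx₁, hx₂, hy₁, hy₂]; nlinarith
      have := Int.ceil_le.mpr hx
      omega
    · have hx : ((D.a - 2 : ℤ) : ℝ) ≤ x₂/2^D.level := by
        rw [le_div_iff₀ hm0]; push_cast; simp only [hx₁, hx₂, hy₁, hy₂]; nlinarith
      have := Int.le_floor.mpr hx
      omega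
    · have hx : y₁/2^D.level ≤ ((D.b + 3 : ℤ) : ℝ) := by
        rw [div_le_iff₀ hm0]; push_cast; simp only [hx₁, hx₂, hy₁, hy₂]; nlinarith
      have := Int.ceil_le.mpr hx
      omega
    · have hx : ((D.b - 2 : ℤ) : ℝ) ≤ y₂/2^D.level := by
        rw [le_div_iff₀ hm0]; push_cast; simp only [hx₁, hx₂, hy₁, hy₂]; nlinarith
      have := Int.le_floor.mpr hx
      omega
  refine ⟨Set.Finite.subset T.finite_toSet hAT, ?_⟩
  have hcard : ((⋃ γ ∈ piCell S c C, calP S c γ).ncard : ℝ) ≤ (T.card : ℝ) := by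
    have := Set.ncard_le_ncard hAT T.finite_toSet
    rw [Set.ncard_coe_finset] at this
    exact_mod_cast this
  have hTcard : (T.card : ℝ) ≤ ∑ ℓ ∈ Finset.Icc L U, ((F ℓ).card : ℝ) := by
    have h := Finset.card_biUnion_le (s := Finset.Icc L U) (t := F)
    calc (T.card:ℝ) ≤ ((∑ ℓ ∈ Finset.Icc L U, (F ℓ).card : ℕ) : ℝ) := by exact_mod_cast h
      _ = ∑ ℓ ∈ Finset.Icc L U, ((F ℓ).card : ℝ) := by push_cast; rfl
  have hterm : ∀ ℓ ∈ Finset.Icc L U,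
      ((F ℓ).card : ℝ) ≤ 160*ψ^2*(1/2:ℝ)^((ℓ-L).toNat) + 36 := by
    intro ℓ hℓ
    rw [Finset.mem_Icc] at hℓ
    have hm0 : (0:ℝ) < 2^ℓ := by positivity
    set t : ℝ := ψ*d/2^ℓ with htdef
    have ht0 : 0 ≤ t := by positivity
    set n : ℕ := (ℓ-L).toNat with hndef
    set r : ℝ := (1/2:ℝ)^n with hrdef
    have hr0 : (0:ℝ) ≤ r := by positivity
    have hr1 : r ≤ 1 := by
      rw [hrdef]; exact pow_le_one₀ (by norm_num) (by norm_num)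
    have hrL : (2:ℝ)^(L-ℓ) = r := by
      rw [hrdef]
      have : (1/2:ℝ)^n = ((2:ℝ)^n)⁻¹ := by rw [one_div, inv_pow]
      rw [this, ← zpow_natCast (2:ℝ) n, ← zpow_neg]
      congr 1
      omega
    have htr : t ≤ 4*ψ*r := by
      rw [← hrL, htdef, div_le_iff₀ hm0]
      have h2 : (2:ℝ)^(L-ℓ) * 2^ℓ = 2^L := by
        rw [← zpow_add₀ (by norm_num : (2:ℝ) ≠ 0)]
        congr 1
        omega
      calc ψ*d = 4*ψ*(d/4) := by ring
        _ ≤ 4*ψ*(2:ℝ)^L :=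
            mul_le_mul_of_nonneg_left hL2.le (by positivity)
        _ = 4 * ψ * ((2:ℝ)^(L-ℓ) * 2^ℓ) := by rw [h2]
        _ = 4 * ψ * (2:ℝ)^(L-ℓ) * 2^ℓ := by ring
    have hA : ((Finset.Icc (⌈x₁/2^ℓ⌉ - 3) (⌊x₂/2^ℓ⌋ + 2)).card : ℝ) ≤ 2*t + 6 := by
      apply card_Icc_le_real
      · have f1 : ((⌊x₂/2^ℓ⌋:ℝ)) ≤ x₂/2^ℓ := Int.floor_le _
        have f2 : x₁/2^ℓ ≤ (⌈x₁/2^ℓ⌉:ℝ) := Int.le_ceil _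
        have e : x₂/2^ℓ - x₁/2^ℓ = (C.side + ψ*d)/2^ℓ := by
          rw [hx₁, hx₂]; ring
        have e2 : (C.side + ψ*d)/2^ℓ ≤ 2*t := by
          have e3 : 2*(ψ*d/2^ℓ)*2^ℓ = 2*(ψ*d) := by field_simp
          rw [htdef, div_le_iff₀ hm0, e3]
          linarith
        push_cast
        linarith
      · positivity
    have hB : ((Finset.Icc (⌈y₁/2^ℓ⌉ - 3) (⌊y₂/2^ℓ⌋ + 2)).card : ℝ) ≤ 2*t + 6 := by
      apply card_Icc_le_real
      · have f1 : ((⌊y₂/2^ℓ⌋:ℝ)) ≤ y₂/2^ℓ := Int.floor_le _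
        have f2 : y₁/2^ℓ ≤ (⌈y₁/2^ℓ⌉:ℝ) := Int.le_ceil _
        have e : y₂/2^ℓ - y₁/2^ℓ = (C.side + ψ*d)/2^ℓ := by
          rw [hy₁, hy₂]; ring
        have e2 : (C.side + ψ*d)/2^ℓ ≤ 2*t := by
          have e3 : 2*(ψ*d/2^ℓ)*2^ℓ = 2*(ψ*d) := by field_simp
          rw [htdef, div_le_iff₀ hm0, e3]
          linarith
        push_cast
        linarith
      · positivity
    have hFcard : ((F ℓ).card : ℝ) ≤ (2*t+6) * (2*t+6) := by
      have h1 : (F ℓ).card ≤ (Finset.Icc (⌈x₁/2^ℓ⌉ - 3) (⌊x₂/2^ℓ⌋ + 2)).card *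
          (Finset.Icc (⌈y₁/2^ℓ⌉ - 3) (⌊y₂/2^ℓ⌋ + 2)).card := by
        refine (Finset.card_image_le).trans ?_
        rw [Finset.card_product]
      have h2 : ((F ℓ).card : ℝ) ≤ ((Finset.Icc (⌈x₁/2^ℓ⌉ - 3) (⌊x₂/2^ℓ⌋ + 2)).card : ℝ) *
          ((Finset.Icc (⌈y₁/2^ℓ⌉ - 3) (⌊y₂/2^ℓ⌋ + 2)).card : ℝ) := by exact_mod_cast h1
      refine h2.trans (mul_le_mul hA hB (Nat.cast_nonneg _) (by linarith))
    refine hFcard.trans ?_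
    nlinarith [mul_nonneg hr0 (sq_nonneg ψ), mul_nonneg hψ0.le hr0,
      mul_le_mul htr htr ht0 (by positivity), sq_nonneg (ψ*r), mul_nonneg ht0 ht0,
      mul_le_mul_of_nonneg_left hr1 (mul_nonneg (mul_nonneg (by norm_num : (0:ℝ) ≤ 16) (sq_nonneg ψ)) hr0)]
  have hgeo : ∑ ℓ ∈ Finset.Icc L U, ((1/2:ℝ))^((ℓ-L).toNat) ≤ 2 := by
    have hinj : ∀ x ∈ Finset.Icc L U, ∀ y ∈ Finset.Icc L U,
        (x-L).toNat = (y-L).toNat → x = y := by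
      intro x hx y hy hxy
      rw [Finset.mem_Icc] at hx hy
      omega
    rw [← Finset.sum_image (g := fun ℓ => (ℓ-L).toNat) (f := fun n => ((1/2:ℝ))^n) hinj]
    refine (Finset.sum_le_sum_of_subset_of_nonneg ?_ ?_).trans
      (sum_geometric_two_le ((U-L).toNat+1))
    · intro n hn
      simp only [Finset.mem_image] at hn
      obtain ⟨ℓ, hℓ, rfl⟩ := hn
      rw [Finset.mem_Icc] at hℓ
      rw [Finset.mem_range]
      omega
    · intro i _ _
      positivity
  have hcardIcc : ((Finset.Icc L U).card : ℝ) ≤ 4*ψ := by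
    rw [Int.card_Icc]
    rcases le_or_gt L U with hLU | hLU
    · have hk : (U + 1 - L).toNat = (U-L).toNat + 1 := by omega
      rw [hk]
      have h2 : ((U-L).toNat + 1 : ℝ) ≤ (2:ℝ)^((U-L).toNat) := by
        exact_mod_cast Nat.lt_two_pow_self (n := (U-L).toNat)
      have h3 : (2:ℝ)^((U-L).toNat) = (2:ℝ)^(U-L : ℤ) := by
        rw [← zpow_natCast]
        congr 1
        omega
      have h4 : (2:ℝ)^(U-L:ℤ) ≤ 4*ψ := by
        have e : (2:ℝ)^(U-L:ℤ) = 2^U / 2^L := by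
          rw [zpow_sub₀ (by norm_num : (2:ℝ) ≠ 0)]
        rw [e, div_le_iff₀ (by positivity)]
        nlinarith
      push_cast
      linarith
    · have hz : (U + 1 - L).toNat = 0 := by omega
      rw [hz]
      norm_num
      positivity
  calc ((⋃ γ ∈ piCell S c C, calP S c γ).ncard : ℝ)
      ≤ (T.card : ℝ) := hcard
    _ ≤ ∑ ℓ ∈ Finset.Icc L U, ((F ℓ).card : ℝ) := hTcard
    _ ≤ ∑ ℓ ∈ Finset.Icc L U, (160*ψ^2*(1/2:ℝ)^((ℓ-L).toNat) + 36) :=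
        Finset.sum_le_sum hterm
    _ = 160*ψ^2 * (∑ ℓ ∈ Finset.Icc L U, ((1/2:ℝ))^((ℓ-L).toNat))
        + 36 * ((Finset.Icc L U).card : ℝ) := by
        rw [Finset.sum_add_distrib, ← Finset.mul_sum, Finset.sum_const,
          nsmul_eq_mul]
        ring
    _ ≤ 160*ψ^2 * 2 + 36 * (4*ψ) := by
        have := mul_le_mul_of_nonneg_left hgeo (by positivity : (0:ℝ) ≤ 160*ψ^2)
        have := mul_le_mul_of_nonneg_left hcardIcc (by norm_num : (0:ℝ) ≤ 36)
        linarith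
    _ ≤ 1000 * ψ^2 := by nlinarith
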